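/- Theorem 1 (sampling with replacement): For every natural number k ≥ 1, real p ∈ (0,1], and real q > 1, a binomial B(k,p) random variable X̂ satisfies P(k·p/q ≤ X̂ ≤ q·k·p) ≥ 1 − Ω − Ψ, where σ² = p(1−p), Ω = min( (e^{q−1}/q^q)^{p·k} , exp(−k·(pq−p)²/(2σ² + 2(pq−p)/3)) ) and Ψ = min( (e^{1/q−1}·q^{1/q})^{p·k} , exp(−k·(p−p/q)²/(2σ² + 2(p−p/q)/3)) ). -/

import Mathlib

open Classical in
/-- Probability that a binomial B(k,p) random variable satisfies predicate `P`. -/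
noncomputable def binomProb (k : ℕ) (p : ℝ) (P : ℕ → Prop) : ℝ :=
  ∑ i ∈ Finset.range (k + 1),
    if P i then (k.choose i : ℝ) * p ^ i * (1 - p) ^ (k - i) else 0

/-!
Missing the window `[kp/q, qkp]` means landing in one of the two tails, and each tail is bounded
through the exponential Markov inequality `P(l X̂ ≥ a) ≤ e^(-a) (1 - p + p e^l)^k`.
With `l = log r` and `1 + x ≤ e^x` this is the multiplicative Chernoff bound
`(e^(r-1) / r^r)^(pk)`, used at `r = q` and `r = 1/q`. With `l = ±t / (σ² + t/3)`, Bennett's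
estimate `e^(ly) ≤ 1 + ly + y² (e^|l| - |l| - 1)` for `|y| ≤ 1` and the series bound
`(1 - l/3)(e^l - l - 1) ≤ l²/2` give Bernstein's bound `exp(-k t² / (2σ² + 2t/3))`,
used at `t = pq - p` and `t = p - p/q`.
-/

open Real Finset
open scoped Nat

namespace Real

lemma hasSum_exp_sub_sub_one (x : ℝ) :
    HasSum (fun n : ℕ => x ^ (n + 2) / (n + 2)!) (exp x - x - 1) := by
  have h := NormedSpace.expSeries_div_hasSum_exp x
  rw [← Real.exp_eq_exp_ℝ, ← hasSum_nat_add_iff' 2] at h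
  simpa [Finset.sum_range_succ, sub_sub, add_comm] using h

lemma exp_mul_le_of_abs_le_one (l : ℝ) {y : ℝ} (hy : |y| ≤ 1) :
    exp (l * y) ≤ 1 + l * y + y ^ 2 * (exp |l| - |l| - 1) := by
  have hterm (n : ℕ) : (l * y) ^ (n + 2) / (n + 2)! ≤ y ^ 2 * (|l| ^ (n + 2) / (n + 2)!) := by
    rw [← mul_div_assoc]
    gcongr
    calc (l * y) ^ (n + 2) ≤ |l * y| ^ (n + 2) := by rw [← abs_pow]; exact le_abs_self _
      _ = |l| ^ (n + 2) * |y| ^ (n + 2) := by rw [abs_mul, mul_pow]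
      _ ≤ |l| ^ (n + 2) * |y| ^ 2 :=
          mul_le_mul_of_nonneg_left (pow_le_pow_of_le_one (abs_nonneg y) hy (by omega))
            (by positivity)
      _ = y ^ 2 * |l| ^ (n + 2) := by rw [sq_abs, mul_comm]
  have := hasSum_le hterm (hasSum_exp_sub_sub_one (l * y)) ((hasSum_exp_sub_sub_one |l|).mul_left _)
  linarith

lemma one_sub_div_three_mul_exp_sub_sub_one_le {l : ℝ} (hl : 0 ≤ l) :
    (1 - l / 3) * (exp l - l - 1) ≤ l ^ 2 / 2 := by
  rcases lt_or_ge l 3 with hl3 | hl3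
  · have hterm (n : ℕ) : l ^ (n + 2) / (n + 2)! ≤ l ^ 2 / 2 * (l / 3) ^ n := by
      have hfac : ((2 * 3 ^ n : ℕ) : ℝ) ≤ (n + 2)! := by
        rw [add_comm n 2]; exact_mod_cast (Nat.factorial_mul_pow_le_factorial (m := 2) (n := n))
      calc l ^ (n + 2) / (n + 2)! ≤ l ^ (n + 2) / ((2 * 3 ^ n : ℕ) : ℝ) := by gcongr
        _ = l ^ 2 / 2 * (l / 3) ^ n := by push_cast; rw [div_pow]; ring
    have hgeom := (hasSum_geometric_of_lt_one (by positivity) (by linarith : l / 3 < 1)).mul_left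
      (l ^ 2 / 2)
    have := hasSum_le hterm (hasSum_exp_sub_sub_one l) hgeom
    have h13 : 0 < 1 - l / 3 := by linarith
    calc (1 - l / 3) * (exp l - l - 1) ≤ (1 - l / 3) * (l ^ 2 / 2 * (1 - l / 3)⁻¹) := by gcongr
      _ = l ^ 2 / 2 := by field_simp
  · have : 0 ≤ exp l - l - 1 := by linarith [add_one_le_exp l]
    exact (mul_nonpos_of_nonpos_of_nonneg (by linarith) this).trans (by positivity)

lemma mul_exp_sub_sub_one_sub_mul_le {s t l : ℝ} (hs : 0 ≤ s) (ht : 0 ≤ t) (hl0 : 0 ≤ l)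
    (hl : l * (s + t / 3) = t) :
    s * (exp l - l - 1) - l * t ≤ -(l * t) / 2 := by
  have hs_eq : s = (s + t / 3) * (1 - l / 3) := by linarith
  have := mul_le_mul_of_nonneg_left (one_sub_div_three_mul_exp_sub_sub_one_le hl0)
    (by positivity : 0 ≤ s + t / 3)
  have hquad : (s + t / 3) * (l ^ 2 / 2) = l * t / 2 := by linear_combination (l / 2) * hl
  rw [hs_eq, mul_assoc]
  linarith

end Real

section Binomial

variable {k : ℕ} {p : ℝ}

lemma bernoulli_mgf_mul_exp_le (hp0 : 0 ≤ p) (hp1 : p ≤ 1) (l : ℝ) :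
    (1 - p + p * exp l) * exp (-(l * p)) ≤ exp (p * (1 - p) * (exp |l| - |l| - 1)) := by
  have hsucc := exp_mul_le_of_abs_le_one l (y := 1 - p) (by rw [abs_le]; constructor <;> linarith)
  have hfail := exp_mul_le_of_abs_le_one l (y := -p) (by rw [abs_le]; constructor <;> linarith)
  have hsplit : exp (l * (1 - p)) = exp l * exp (-(l * p)) := by rw [← exp_add]; ring_nf
  rw [hsplit] at hsucc
  rw [mul_neg] at hfail
  calc (1 - p + p * exp l) * exp (-(l * p))
      = p * (exp l * exp (-(l * p))) + (1 - p) * exp (-(l * p)) := by ring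
    _ ≤ 1 + p * (1 - p) * (exp |l| - |l| - 1) := by
      linarith [mul_le_mul_of_nonneg_left hsucc hp0,
        mul_le_mul_of_nonneg_left hfail (by linarith : 0 ≤ 1 - p)]
    _ ≤ exp (p * (1 - p) * (exp |l| - |l| - 1)) := (add_comm _ _).trans_le (add_one_le_exp _)

lemma choose_mul_pow_mul_one_sub_pow_nonneg {i : ℕ} (hp0 : 0 ≤ p) (hp1 : p ≤ 1) :
    0 ≤ (k.choose i : ℝ) * p ^ i * (1 - p) ^ (k - i) := by
  have : 0 ≤ 1 - p := by linarith
  positivity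

lemma sum_choose_mul_pow_mul_pow_mul_pow (k : ℕ) (p c : ℝ) :
    ∑ i ∈ range (k + 1), (k.choose i : ℝ) * p ^ i * (1 - p) ^ (k - i) * c ^ i
      = (1 - p + p * c) ^ k := by
  rw [show 1 - p + p * c = p * c + (1 - p) by ring, add_pow]
  refine sum_congr rfl fun i _ => ?_
  ring

lemma binomProb_add_binomProb_not (k : ℕ) (p : ℝ) (P : ℕ → Prop) :
    binomProb k p P + binomProb k p (fun i => ¬ P i) = 1 := by
  classical
  have h := sum_choose_mul_pow_mul_pow_mul_pow k p 1
  simp only [one_pow, mul_one, sub_add_cancel] at h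
  rw [binomProb, binomProb, ← sum_add_distrib, ← h]
  refine sum_congr rfl fun i _ => ?_
  split_ifs <;> simp_all

lemma binomProb_mono (hp0 : 0 ≤ p) (hp1 : p ≤ 1) {P Q : ℕ → Prop} (h : ∀ i, P i → Q i) :
    binomProb k p P ≤ binomProb k p Q := by
  classical
  refine sum_le_sum fun i _ => ?_
  have := choose_mul_pow_mul_one_sub_pow_nonneg (k := k) (i := i) hp0 hp1
  split_ifs <;> simp_all

lemma binomProb_or_le (hp0 : 0 ≤ p) (hp1 : p ≤ 1) (P Q : ℕ → Prop) :
    binomProb k p (fun i => P i ∨ Q i) ≤ binomProb k p P + binomProb k p Q := by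
  classical
  rw [binomProb, binomProb, binomProb, ← sum_add_distrib]
  refine sum_le_sum fun i _ => ?_
  have := choose_mul_pow_mul_one_sub_pow_nonneg (k := k) (i := i) hp0 hp1
  split_ifs <;> simp_all

lemma binomProb_le_exp_mul_mgf (hp0 : 0 ≤ p) (hp1 : p ≤ 1) (a l : ℝ) :
    binomProb k p (fun i => a ≤ l * i) ≤ exp (-a) * (1 - p + p * exp l) ^ k := by
  classical
  rw [← sum_choose_mul_pow_mul_pow_mul_pow, mul_sum]
  refine sum_le_sum fun i _ => ?_
  have hw := choose_mul_pow_mul_one_sub_pow_nonneg (k := k) (i := i) hp0 hp1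
  have hexp : exp (-a) * exp l ^ i = exp (l * i - a) := by
    rw [← exp_nat_mul, ← exp_add]; ring_nf
  split_ifs with h
  · have : 1 ≤ exp (l * i - a) := one_le_exp (by linarith)
    nlinarith
  · positivity

lemma binomProb_chernoff (hp0 : 0 ≤ p) (hp1 : p ≤ 1) {r : ℝ} (hr : 0 < r) :
    binomProb k p (fun i => log r * (r * k * p) ≤ log r * i) ≤
      (exp (r - 1) / r ^ r) ^ (p * k) := by
  have hmgf : (1 - p + p * exp (log r)) ^ k ≤ exp (p * (r - 1)) ^ k := by
    rw [exp_log hr]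
    gcongr
    linarith [add_one_le_exp (p * (r - 1))]
  have hbase : log (exp (r - 1) / r ^ r) = r - 1 - r * log r := by
    rw [log_div (exp_ne_zero _) (rpow_pos_of_pos hr r).ne', log_exp, log_rpow hr]
  calc _ ≤ exp (-(log r * (r * k * p))) * (1 - p + p * exp (log r)) ^ k :=
        binomProb_le_exp_mul_mgf hp0 hp1 _ _
    _ ≤ exp (-(log r * (r * k * p))) * exp (p * (r - 1)) ^ k := by gcongr
    _ = (exp (r - 1) / r ^ r) ^ (p * k) := by
      rw [rpow_def_of_pos (by positivity), hbase, ← exp_nat_mul, ← exp_add]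
      ring_nf

-- The event is `l (X̂ - kp) ≥ |l| k t`: the upper tail if `l ≥ 0`, the lower one if `l ≤ 0`.
lemma binomProb_bennett (hp0 : 0 ≤ p) (hp1 : p ≤ 1) (l t : ℝ) :
    binomProb k p (fun i => l * (k * p) + |l| * (k * t) ≤ l * i) ≤
      exp (k * (p * (1 - p) * (exp |l| - |l| - 1) - |l| * t)) := by
  calc _ ≤ exp (-(l * (k * p) + |l| * (k * t))) * (1 - p + p * exp l) ^ k :=
        binomProb_le_exp_mul_mgf hp0 hp1 _ _
    _ = exp (-(|l| * (k * t))) * ((1 - p + p * exp l) * exp (-(l * p))) ^ k := by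
      rw [mul_pow, ← exp_nat_mul (-(l * p)),
        show -(l * (k * p) + |l| * (k * t)) = -(|l| * (k * t)) + k * -(l * p) by ring, exp_add]
      ring
    _ ≤ exp (-(|l| * (k * t))) * exp (p * (1 - p) * (exp |l| - |l| - 1)) ^ k := by
      gcongr
      exact bernoulli_mgf_mul_exp_le hp0 hp1 l
    _ = _ := by rw [← exp_nat_mul, ← exp_add]; ring_nf

lemma binomProb_bernstein (hp0 : 0 ≤ p) (hp1 : p ≤ 1) {t : ℝ} (ht : 0 < t) {l : ℝ}
    (hl : |l| = t / (p * (1 - p) + t / 3)) :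
    binomProb k p (fun i => l * (k * p) + |l| * (k * t) ≤ l * i) ≤
      exp (-(k * t ^ 2) / (2 * (p * (1 - p)) + 2 * t / 3)) := by
  have hσ : 0 ≤ p * (1 - p) := mul_nonneg hp0 (by linarith)
  have hden : 0 < p * (1 - p) + t / 3 := by positivity
  have hexponent := mul_exp_sub_sub_one_sub_mul_le hσ ht.le (abs_nonneg l)
    (by rw [hl, div_mul_cancel₀ _ hden.ne'])
  calc _ ≤ exp (k * (p * (1 - p) * (exp |l| - |l| - 1) - |l| * t)) :=
        binomProb_bennett hp0 hp1 l t
    _ ≤ exp (k * (-(|l| * t) / 2)) := by gcongr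
    _ = _ := by
      rw [hl]; congr 1; field_simp

lemma binomProb_upper_tail_le (hp0 : 0 < p) (hp1 : p ≤ 1) {q : ℝ} (hq : 1 < q) :
    binomProb k p (fun i => q * k * p ≤ i) ≤
      min ((exp (q - 1) / q ^ q) ^ (p * k))
        (exp (-(k * (p * q - p) ^ 2) / (2 * (p * (1 - p)) + 2 * (p * q - p) / 3))) := by
  have ht : 0 < p * q - p := by nlinarith
  set l := (p * q - p) / (p * (1 - p) + (p * q - p) / 3)
  have hl : 0 ≤ l := div_nonneg ht.le (by nlinarith)
  refine le_min ((binomProb_mono hp0.le hp1 fun i hi => ?_).trans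
      (binomProb_chernoff hp0.le hp1 (by linarith)))
    ((binomProb_mono hp0.le hp1 fun i hi => ?_).trans
      (binomProb_bernstein hp0.le hp1 ht (abs_of_nonneg hl)))
  · exact mul_le_mul_of_nonneg_left hi (log_nonneg hq.le)
  · calc l * (k * p) + |l| * (k * (p * q - p)) = l * (q * k * p) := by rw [abs_of_nonneg hl]; ring
      _ ≤ l * i := mul_le_mul_of_nonneg_left hi hl

lemma binomProb_lower_tail_le (hp0 : 0 < p) (hp1 : p ≤ 1) {q : ℝ} (hq : 1 < q) :
    binomProb k p (fun i => i ≤ k * p / q) ≤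
      min ((exp (1 / q - 1) * q ^ (1 / q)) ^ (p * k))
        (exp (-(k * (p - p / q) ^ 2) / (2 * (p * (1 - p)) + 2 * (p - p / q) / 3))) := by
  have hq0 : 0 < q := by linarith
  have ht : 0 < p - p / q := sub_pos.2 (div_lt_self hp0 hq)
  set l := (p - p / q) / (p * (1 - p) + (p - p / q) / 3)
  have hl : 0 ≤ l := div_nonneg ht.le (by nlinarith)
  have hbase : exp (1 / q - 1) / (1 / q) ^ (1 / q) = exp (1 / q - 1) * q ^ (1 / q) := by
    rw [div_eq_mul_inv, ← inv_rpow (by positivity), inv_div, div_one]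
  refine le_min ((binomProb_mono hp0.le hp1 fun i hi => ?_).trans
      (hbase ▸ binomProb_chernoff hp0.le hp1 (by positivity : 0 < 1 / q)))
    ((binomProb_mono hp0.le hp1 fun i hi => ?_).trans
      (binomProb_bernstein hp0.le hp1 ht (l := -l) (by rw [abs_neg, abs_of_nonneg hl])))
  · calc log (1 / q) * (1 / q * k * p) = log (1 / q) * (k * p / q) := by ring
      _ ≤ log (1 / q) * i :=
        mul_le_mul_of_nonpos_left hi (log_nonpos (by positivity) ((div_le_one hq0).2 hq.le))
  · calc -l * (k * p) + |-l| * (k * (p - p / q)) = -(l * (k * p / q)) := by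
          rw [abs_neg, abs_of_nonneg hl]; ring
      _ ≤ -l * i := by linarith [mul_le_mul_of_nonneg_left hi hl]

end Binomial

theorem qerror_bound_with_replacement_general (k : ℕ) (p : ℝ) (hp0 : 0 < p) (hp1 : p ≤ 1)
    (q : ℝ) (hq : 1 < q) :
    1 - min ((Real.exp (q - 1) / q ^ q) ^ (p * k))
          (Real.exp (-(k * (p * q - p) ^ 2) / (2 * (p * (1 - p)) + 2 * (p * q - p) / 3)))
      - min ((Real.exp (1 / q - 1) * q ^ (1 / q)) ^ (p * k))
          (Real.exp (-(k * (p - p / q) ^ 2) / (2 * (p * (1 - p)) + 2 * (p - p / q) / 3))) ≤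
    binomProb k p (fun i => k * p / q ≤ (i : ℝ) ∧ (i : ℝ) ≤ q * k * p) := by
  have hcover : ∀ i : ℕ, ¬ (k * p / q ≤ (i : ℝ) ∧ (i : ℝ) ≤ q * k * p) →
      (q * k * p ≤ (i : ℝ)) ∨ (i : ℝ) ≤ k * p / q := by
    intro i hi
    by_contra! h
    exact hi ⟨h.2.le, h.1.le⟩
  have hcompl := binomProb_add_binomProb_not k p
    (fun i => k * p / q ≤ (i : ℝ) ∧ (i : ℝ) ≤ q * k * p)
  have htails := (binomProb_mono (k := k) hp0.le hp1 hcover).trans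
    (binomProb_or_le hp0.le hp1 _ _)
  linarith [binomProb_upper_tail_le (k := k) hp0 hp1 hq,
    binomProb_lower_tail_le (k := k) hp0 hp1 hq]

theorem qerror_bound_with_replacement (k : ℕ) (hk : 1 ≤ k) (p : ℝ) (hp0 : 0 < p) (hp1 : p ≤ 1)
    (q : ℝ) (hq : 1 < q) :
    1 - min ((Real.exp (q - 1) / q ^ q) ^ (p * k))
          (Real.exp (-(k * (p * q - p) ^ 2) / (2 * (p * (1 - p)) + 2 * (p * q - p) / 3)))
      - min ((Real.exp (1 / q - 1) * q ^ (1 / q)) ^ (p * k))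
          (Real.exp (-(k * (p - p / q) ^ 2) / (2 * (p * (1 - p)) + 2 * (p - p / q) / 3))) ≤
    binomProb k p (fun i => k * p / q ≤ (i : ℝ) ∧ (i : ℝ) ≤ q * k * p) :=
  qerror_bound_with_replacement_general k p hp0 hp1 q hq
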